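/- arXiv:2009.11723 — 3 statements merged into one kernel-verified Lean document; each statement's English description precedes it below -/
import Mathlib

section
/- Every symmetric traceless 3×3 real matrix D can be written as D = a⌊n₁⊗n₂⌋ for some a ≥ 0 and unit vectors n₁, n₂ ∈ ℝ³, where ⌊n₁⊗n₂⌋ = (1/2)(n₁⊗n₂ + n₂⊗n₁) − (1/3)(n₁·n₂)I. -/
open Finset Matrix

/-- The symmetric traceless part `⌊n₁⊗n₂⌋ = (1/2)(n₁⊗n₂ + n₂⊗n₁) − (1/3)(n₁·n₂)I`. -/
noncomputable def devOuter (n m : Fin 3 → ℝ) : Matrix (Fin 3) (Fin 3) ℝ :=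
  (1 / 2 : ℝ) • (Matrix.vecMulVec n m + Matrix.vecMulVec m n) -
    ((1 / 3 : ℝ) * (∑ i, n i * m i)) • (1 : Matrix (Fin 3) (Fin 3) ℝ)

/-! Diagonalize `D` by an orthogonal matrix. Since `devOuter` is equivariant under orthogonal
changes of basis and under permutations of coordinates, it suffices to treat
`D = diag(μ₀, μ₁, μ₂)` with `μ₀ ≤ μ₁ ≤ μ₂` and `μ₀ + μ₁ + μ₂ = 0`. There the pair
`n₁, n₂ = (±s, 0, c)` gives a diagonal `devOuter n₁ n₂`, and `a = μ₁ + 2μ₂`,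
`a s² = 2μ₁ + μ₂`, `a c² = μ₂ - μ₁` solve the remaining equations; the ordering of the `μᵢ`
is what makes these right-hand sides nonnegative. -/

def HasMultipoleRep (D : Matrix (Fin 3) (Fin 3) ℝ) : Prop :=
  ∃ (a : ℝ) (n₁ n₂ : Fin 3 → ℝ), 0 ≤ a ∧
    (∑ i, n₁ i ^ 2 = 1) ∧ (∑ i, n₂ i ^ 2 = 1) ∧ D = a • devOuter n₁ n₂

lemma devOuter_comp_perm (σ : Equiv.Perm (Fin 3)) (n m : Fin 3 → ℝ) :
    devOuter (n ∘ σ) (m ∘ σ) = (devOuter n m).submatrix σ σ := by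
  ext i j
  simp [devOuter, vecMulVec_apply, one_apply, Equiv.sum_comp σ (fun i => n i * m i)]

lemma dotProduct_mulVec_orthogonal {n R : Type*} [Fintype n] [DecidableEq n] [CommRing R]
    {U : Matrix n n R} (hU : U ∈ orthogonalGroup n R) (v w : n → R) :
    (U *ᵥ v) ⬝ᵥ (U *ᵥ w) = v ⬝ᵥ w := by
  rw [dotProduct_mulVec, ← vecMul_transpose, vecMul_vecMul, (mem_orthogonalGroup_iff' _ _).mp hU,
    vecMul_one]

lemma devOuter_mulVec_orthogonal {U : Matrix (Fin 3) (Fin 3) ℝ}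
    (hU : U ∈ orthogonalGroup (Fin 3) ℝ) (n m : Fin 3 → ℝ) :
    devOuter (U *ᵥ n) (U *ᵥ m) = U * devOuter n m * Uᵀ := by
  have hdot := dotProduct_mulVec_orthogonal hU n m
  simp only [dotProduct] at hdot
  simp [devOuter, hdot, mul_add, add_mul, mul_sub, sub_mul, mul_vecMulVec, vecMulVec_mul,
    vecMul_transpose, (mem_orthogonalGroup_iff _ _).mp hU]

lemma devOuter_vec3_eq_diagonal (s c : ℝ) :
    devOuter ![s, 0, c] ![-s, 0, c] =
      diagonal ![-(2 * s ^ 2 + c ^ 2) / 3, (s ^ 2 - c ^ 2) / 3, (2 * c ^ 2 + s ^ 2) / 3] := by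
  ext i j
  fin_cases i <;> fin_cases j <;> simp [devOuter, Fin.sum_univ_three] <;> ring

lemma hasMultipoleRep_zero : HasMultipoleRep 0 :=
  ⟨0, ![1, 0, 0], ![1, 0, 0], le_rfl, by simp [Fin.sum_univ_three], by simp [Fin.sum_univ_three],
    (zero_smul _ _).symm⟩

lemma HasMultipoleRep.submatrix_perm {D : Matrix (Fin 3) (Fin 3) ℝ} (hD : HasMultipoleRep D)
    (σ : Equiv.Perm (Fin 3)) : HasMultipoleRep (D.submatrix σ σ) := by
  obtain ⟨a, n₁, n₂, ha, h₁, h₂, rfl⟩ := hD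
  refine ⟨a, n₁ ∘ σ, n₂ ∘ σ, ha, ?_, ?_, ?_⟩
  · simpa using (Equiv.sum_comp σ fun i => n₁ i ^ 2).trans h₁
  · simpa using (Equiv.sum_comp σ fun i => n₂ i ^ 2).trans h₂
  · rw [devOuter_comp_perm]
    rfl

lemma HasMultipoleRep.conj_orthogonal {D U : Matrix (Fin 3) (Fin 3) ℝ} (hD : HasMultipoleRep D)
    (hU : U ∈ orthogonalGroup (Fin 3) ℝ) : HasMultipoleRep (U * D * Uᵀ) := by
  obtain ⟨a, n₁, n₂, ha, h₁, h₂, rfl⟩ := hD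
  have hnorm (n : Fin 3 → ℝ) : ∑ i, (U *ᵥ n) i ^ 2 = ∑ i, n i ^ 2 := by
    simpa [dotProduct, sq] using dotProduct_mulVec_orthogonal hU n n
  refine ⟨a, U *ᵥ n₁, U *ᵥ n₂, ha, (hnorm n₁).trans h₁, (hnorm n₂).trans h₂, ?_⟩
  rw [devOuter_mulVec_orthogonal hU, Matrix.mul_smul, Matrix.smul_mul]

lemma hasMultipoleRep_diagonal_of_monotone {μ : Fin 3 → ℝ} (hμ : Monotone μ)
    (hsum : ∑ i, μ i = 0) : HasMultipoleRep (diagonal μ) := by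
  have h01 : μ 0 ≤ μ 1 := hμ (by decide)
  have h12 : μ 1 ≤ μ 2 := hμ (by decide)
  rw [Fin.sum_univ_three] at hsum
  set a := μ 1 + 2 * μ 2
  rcases (show 0 ≤ a by linarith).eq_or_lt with ha | ha
  · have hμ0 : μ = 0 := by
      ext i; fin_cases i <;> simp <;> linarith
    simpa [hμ0] using hasMultipoleRep_zero
  set s := √((2 * μ 1 + μ 2) / a)
  set c := √((μ 2 - μ 1) / a)
  have hs : s ^ 2 = (2 * μ 1 + μ 2) / a := Real.sq_sqrt (div_nonneg (by linarith) ha.le)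
  have hc : c ^ 2 = (μ 2 - μ 1) / a := Real.sq_sqrt (div_nonneg (by linarith) ha.le)
  have hsc : s ^ 2 + c ^ 2 = 1 := by rw [hs, hc]; field_simp; ring
  refine ⟨a, ![s, 0, c], ![-s, 0, c], ha.le, ?_, ?_, ?_⟩
  · simpa [Fin.sum_univ_three, add_comm] using hsc
  · simpa [Fin.sum_univ_three, add_comm] using hsc
  · rw [devOuter_vec3_eq_diagonal, ← diagonal_smul]
    congr 1
    ext i
    fin_cases i <;> simp [hs, hc] <;> field_simp <;> linarith

lemma hasMultipoleRep_diagonal {μ : Fin 3 → ℝ} (hsum : ∑ i, μ i = 0) :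
    HasMultipoleRep (diagonal μ) := by
  set σ := Tuple.sort μ
  have hsorted : HasMultipoleRep (diagonal (μ ∘ σ)) :=
    hasMultipoleRep_diagonal_of_monotone (Tuple.monotone_sort μ)
      ((Equiv.sum_comp σ μ).trans hsum)
  simpa [submatrix_diagonal_equiv, Function.comp_assoc] using hsorted.submatrix_perm σ.symm

/-- Maxwell's multipole representation of a second-order deviator: every symmetric traceless
`3×3` real matrix `D` equals `a⌊n₁⊗n₂⌋` for some `a ≥ 0` and unit vectors `n₁, n₂`. -/
theorem multipole_representation_order2 (D : Matrix (Fin 3) (Fin 3) ℝ)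
    (hsym : D.IsSymm) (htr : Matrix.trace D = 0) :
    ∃ (a : ℝ) (n₁ n₂ : Fin 3 → ℝ), 0 ≤ a ∧
      (∑ i, n₁ i ^ 2 = 1) ∧ (∑ i, n₂ i ^ 2 = 1) ∧
      D = a • devOuter n₁ n₂ := by
  have hD : D.IsHermitian := isHermitian_iff_isSymm.mpr hsym
  have hsum : ∑ i, hD.eigenvalues i = 0 := by
    simpa [htr] using hD.trace_eq_sum_eigenvalues.symm
  have hspec : D = hD.eigenvectorUnitary * diagonal hD.eigenvalues *
      (hD.eigenvectorUnitary : Matrix (Fin 3) (Fin 3) ℝ)ᵀ := by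
    conv_lhs => rw [hD.spectral_theorem]
    simp [RCLike.ofReal_real_eq_id, star_eq_conjTranspose]
  rw [hspec]
  exact (hasMultipoleRep_diagonal hsum).conj_orthogonal hD.eigenvectorUnitary.2
end

section
/- In the multipole representation D = a⌊n₁⊗n₂⌋ of a nonzero symmetric traceless 3×3 matrix D, the scalar a > 0 is unique, and the pair of unit vectors {n₁, n₂} is unique up to swapping and up to an even number of sign changes (i.e., {n₁,n₂}, {−n₁,−n₂} give the same D). -/
/-!
For unit vectors with `c = n₁ · n₂`, the eigenvalues of `a⌊n₁⊗n₂⌋` are `a(c+3)/6 ≥ a/3`,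
`-ac/3 ∈ [-a/3, a/3]` and `a(c-3)/6 ≤ -a/3`. Two representations of `D` have the same
`tr D²` and `det D`, hence the same spectrum; since these bounds separate the three
eigenvalues in both representations, the largest and smallest ones match, so `a = a'` (their
difference) and `c = c'`. Then `n₁ ⊗ n₂ + n₂ ⊗ n₁` is determined by
`D`, and it has the orthogonal eigenvectors `n₁ + n₂` and `n₁ - n₂` (of lengths fixed by `c`),
which pin down `n₁' + n₂'` and `n₁' - n₂'` up to sign.
-/

open Finset Matrix

section SymmetrizedOuterProduct

variable {ι : Type*}

theorem eq_and_eq_of_add_eq_add_of_sub_eq_sub {x y u v : ι → ℝ} (hadd : u + v = x + y)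
    (hsub : u - v = x - y) : u = x ∧ v = y := by
  constructor <;> funext i <;>
    linarith [congrFun hadd i, congrFun hsub i, Pi.add_apply u v i, Pi.sub_apply u v i,
      Pi.add_apply x y i, Pi.sub_apply x y i]

variable [Fintype ι]

theorem dotProduct_sq_le_dotProduct_self_mul (p q : ι → ℝ) :
    (p ⬝ᵥ q) ^ 2 ≤ (p ⬝ᵥ p) * (q ⬝ᵥ q) := by
  simpa [dotProduct, sq] using Finset.sum_mul_sq_le_sq_mul_sq Finset.univ p q

theorem abs_dotProduct_le_one {p q : ι → ℝ} (hp : p ⬝ᵥ p = 1) (hq : q ⬝ᵥ q = 1) :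
    |p ⬝ᵥ q| ≤ 1 :=
  sq_le_one_iff_abs_le_one _ |>.mp <| by simpa [hp, hq] using dotProduct_sq_le_dotProduct_self_mul p q

theorem eq_or_eq_neg_of_sq_le_sq_dotProduct {p q : ι → ℝ} (hq : q ⬝ᵥ q = p ⬝ᵥ p)
    (h : (p ⬝ᵥ p) ^ 2 ≤ (p ⬝ᵥ q) ^ 2) : q = p ∨ q = -p := by
  have hsq : (p ⬝ᵥ q) ^ 2 = (p ⬝ᵥ p) ^ 2 :=
    le_antisymm (by simpa [hq, sq] using dotProduct_sq_le_dotProduct_self_mul p q) h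
  rcases sq_eq_sq_iff_eq_or_eq_neg.mp hsq with hpq | hpq
  · left
    rw [← sub_eq_zero, ← dotProduct_self_eq_zero, sub_dotProduct, dotProduct_sub,
      dotProduct_sub, dotProduct_comm q p]
    linarith
  · right
    rw [← sub_eq_zero, sub_neg_eq_add, ← dotProduct_self_eq_zero, add_dotProduct, dotProduct_add,
      dotProduct_add, dotProduct_comm q p]
    linarith

theorem dotProduct_vecMulVec_add_mulVec (x y w : ι → ℝ) :
    w ⬝ᵥ ((vecMulVec x y + vecMulVec y x) *ᵥ w) = 2 * ((w ⬝ᵥ x) * (w ⬝ᵥ y)) := by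
  simp only [add_mulVec, vecMulVec_mulVec, dotProduct_add, op_smul_eq_smul, dotProduct_smul,
    smul_eq_mul, dotProduct_comm y w, dotProduct_comm x w]
  ring

theorem four_mul_dotProduct_mul_dotProduct (x y w : ι → ℝ) :
    4 * ((w ⬝ᵥ x) * (w ⬝ᵥ y)) = (w ⬝ᵥ (x + y)) ^ 2 - (w ⬝ᵥ (x - y)) ^ 2 := by
  rw [dotProduct_add, dotProduct_sub]
  ring

theorem eq_or_swap_or_neg_of_vecMulVec_add_eq {x y u v : ι → ℝ}
    (hx : x ⬝ᵥ x = 1) (hy : y ⬝ᵥ y = 1) (hu : u ⬝ᵥ u = 1) (hv : v ⬝ᵥ v = 1)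
    (h : vecMulVec x y + vecMulVec y x = vecMulVec u v + vecMulVec v u) :
    (u = x ∧ v = y) ∨ (u = y ∧ v = x) ∨ (u = -x ∧ v = -y) ∨ (u = -y ∧ v = -x) := by
  have hc : x ⬝ᵥ y = u ⬝ᵥ v := by
    have := congrArg trace h
    simp only [trace_add, trace_vecMulVec, dotProduct_comm y x, dotProduct_comm v u] at this
    linarith
  have hq (w : ι → ℝ) : (w ⬝ᵥ x) * (w ⬝ᵥ y) = (w ⬝ᵥ u) * (w ⬝ᵥ v) := by
    have := congrArg (fun M => w ⬝ᵥ (M *ᵥ w)) h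
    simp only [dotProduct_vecMulVec_add_mulVec] at this
    linarith
  have hpm : (x + y) ⬝ᵥ (x - y) = 0 := by
    rw [add_dotProduct, dotProduct_sub, dotProduct_sub, dotProduct_comm y x]; linarith
  have hp : (u + v) ⬝ᵥ (u + v) = (x + y) ⬝ᵥ (x + y) := by
    simp only [add_dotProduct, dotProduct_add, dotProduct_comm v u, dotProduct_comm y x]
    linarith
  have hm : (u - v) ⬝ᵥ (u - v) = (x - y) ⬝ᵥ (x - y) := by
    simp only [sub_dotProduct, dotProduct_sub, dotProduct_comm v u, dotProduct_comm y x]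
    linarith
  -- Compare both quadratic forms at `x ± y`, the eigenvectors of `x ⊗ y + y ⊗ x`;
  -- Cauchy–Schwarz then forces `u ± v = ±(x ± y)`.
  have hsum : u + v = x + y ∨ u + v = -(x + y) := by
    refine eq_or_eq_neg_of_sq_le_sq_dotProduct hp ?_
    have hxy := four_mul_dotProduct_mul_dotProduct x y (x + y)
    have huv := four_mul_dotProduct_mul_dotProduct u v (x + y)
    rw [hpm, hq] at hxy
    nlinarith [sq_nonneg ((x + y) ⬝ᵥ (u - v))]
  have hdiff : u - v = x - y ∨ u - v = -(x - y) := by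
    refine eq_or_eq_neg_of_sq_le_sq_dotProduct hm ?_
    have hxy := four_mul_dotProduct_mul_dotProduct x y (x - y)
    have huv := four_mul_dotProduct_mul_dotProduct u v (x - y)
    rw [dotProduct_comm (x - y) (x + y), hpm, hq] at hxy
    nlinarith [sq_nonneg ((x - y) ⬝ᵥ (u + v))]
  rcases hsum with hsum | hsum <;> rcases hdiff with hdiff | hdiff
  · exact Or.inl (eq_and_eq_of_add_eq_add_of_sub_eq_sub hsum hdiff)
  · exact Or.inr <| Or.inl <| eq_and_eq_of_add_eq_add_of_sub_eq_sub
      (by rw [hsum, add_comm]) (by rw [hdiff, neg_sub])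
  · exact Or.inr <| Or.inr <| Or.inr <| eq_and_eq_of_add_eq_add_of_sub_eq_sub
      (by rw [hsum]; abel) (by rw [hdiff]; abel)
  · exact Or.inr <| Or.inr <| Or.inl <| eq_and_eq_of_add_eq_add_of_sub_eq_sub
      (by rw [hsum]; abel) (by rw [hdiff]; abel)

end SymmetrizedOuterProduct

theorem trace_devOuter_mul_self (n m : Fin 3 → ℝ) :
    trace (devOuter n m * devOuter n m) = (3 * (n ⬝ᵥ n) * (m ⬝ᵥ m) + (n ⬝ᵥ m) ^ 2) / 6 := by
  simp only [trace, devOuter, one_div, smul_add, Fin.sum_univ_three, Fin.isValue, diag_apply,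
    Matrix.mul_apply, Matrix.sub_apply, Matrix.add_apply, Matrix.smul_apply, vecMulVec_apply,
    smul_eq_mul, one_apply, mul_ite, mul_one, mul_zero, ↓reduceIte, zero_ne_one, sub_zero,
    one_ne_zero, Fin.reduceEq, dotProduct]
  ring

theorem det_devOuter (n m : Fin 3 → ℝ) :
    det (devOuter n m) = (n ⬝ᵥ m) * (9 * (n ⬝ᵥ n) * (m ⬝ᵥ m) - (n ⬝ᵥ m) ^ 2) / 108 := by
  simp only [devOuter, one_div, smul_add, Fin.sum_univ_three, Fin.isValue, det_fin_three,
    Matrix.sub_apply, Matrix.add_apply, Matrix.smul_apply, vecMulVec_apply, smul_eq_mul, one_apply,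
    ↓reduceIte, mul_one, Fin.reduceEq, mul_zero, sub_zero, zero_ne_one, one_ne_zero, dotProduct]
  ring

theorem vecMulVec_add_eq_of_devOuter_eq {x y u v : Fin 3 → ℝ} (h : devOuter x y = devOuter u v)
    (hc : x ⬝ᵥ y = u ⬝ᵥ v) :
    vecMulVec x y + vecMulVec y x = vecMulVec u v + vecMulVec v u := by
  unfold devOuter at h
  change _ - ((1 / 3 : ℝ) * (x ⬝ᵥ y)) • _ = _ - ((1 / 3 : ℝ) * (u ⬝ᵥ v)) • _ at h
  rw [hc, sub_left_inj] at h
  exact smul_right_injective _ (by norm_num) h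

/-- `a(c+3)`, `a(c-3)`, `-2ac` are six times the eigenvalues of `a⌊n₁⊗n₂⌋` for `c = n₁·n₂`;
the hypotheses say that two such spectra share `σ₂` and `σ₃` (both have `σ₁ = 0`), so each
eigenvalue of one is a root of the characteristic polynomial of the other. -/
theorem eigenvalue_cubic_eq_zero {a b c d : ℝ} (h2 : a ^ 2 * (3 + c ^ 2) = b ^ 2 * (3 + d ^ 2))
    (h3 : a ^ 3 * (c * (9 - c ^ 2)) = b ^ 3 * (d * (9 - d ^ 2))) :
    (b * (d + 3) - a * (c + 3)) * (b * (d + 3) - a * (c - 3)) * (b * (d + 3) + 2 * a * c) = 0 := by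
  linear_combination (-3 * b * (d + 3)) * h2 - 2 * h3

theorem mul_add_three_eq_of_invariants_eq {a b c d : ℝ} (ha : 0 < a) (hb : 0 < b)
    (hc : |c| ≤ 1) (hd : |d| ≤ 1) (h2 : a ^ 2 * (3 + c ^ 2) = b ^ 2 * (3 + d ^ 2))
    (h3 : a ^ 3 * (c * (9 - c ^ 2)) = b ^ 3 * (d * (9 - d ^ 2))) :
    a * (c + 3) = b * (d + 3) := by
  have hac : |a * c| ≤ a := by rw [abs_mul, abs_of_pos ha]; nlinarith [abs_nonneg c]
  have hbd : |b * d| ≤ b := by rw [abs_mul, abs_of_pos hb]; nlinarith [abs_nonneg d]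
  obtain ⟨hac₁, hac₂⟩ := abs_le.mp hac
  obtain ⟨hbd₁, hbd₂⟩ := abs_le.mp hbd
  rcases mul_eq_zero.mp (eigenvalue_cubic_eq_zero h2 h3) with h | h
  · rcases mul_eq_zero.mp h with h | h <;> linarith
  rcases mul_eq_zero.mp (eigenvalue_cubic_eq_zero h2.symm h3.symm) with h' | h'
  · rcases mul_eq_zero.mp h' with h' | h' <;> linarith
  linarith

theorem eq_and_eq_of_invariants_eq {a b c d : ℝ} (ha : 0 < a) (hb : 0 < b)
    (hc : |c| ≤ 1) (hd : |d| ≤ 1) (h2 : a ^ 2 * (3 + c ^ 2) = b ^ 2 * (3 + d ^ 2))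
    (h3 : a ^ 3 * (c * (9 - c ^ 2)) = b ^ 3 * (d * (9 - d ^ 2))) :
    a = b ∧ c = d := by
  have top := mul_add_three_eq_of_invariants_eq ha hb hc hd h2 h3
  have bottom := mul_add_three_eq_of_invariants_eq (c := -c) (d := -d) ha hb
    (by rwa [abs_neg]) (by rwa [abs_neg]) (by linear_combination h2) (by linear_combination -h3)
  have hab : a = b := by linarith
  subst hab
  exact ⟨rfl, by nlinarith⟩

theorem multipole_representation_unique_general (D : Matrix (Fin 3) (Fin 3) ℝ)
    (a a' : ℝ) (n₁ n₂ n₁' n₂' : Fin 3 → ℝ)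
    (ha : 0 < a) (ha' : 0 < a')
    (hn₁ : ∑ i, n₁ i ^ 2 = 1) (hn₂ : ∑ i, n₂ i ^ 2 = 1)
    (hn₁' : ∑ i, n₁' i ^ 2 = 1) (hn₂' : ∑ i, n₂' i ^ 2 = 1)
    (hrep : D = a • devOuter n₁ n₂) (hrep' : D = a' • devOuter n₁' n₂') :
    a = a' ∧
    ((n₁' = n₁ ∧ n₂' = n₂) ∨ (n₁' = n₂ ∧ n₂' = n₁) ∨
     (n₁' = -n₁ ∧ n₂' = -n₂) ∨ (n₁' = -n₂ ∧ n₂' = -n₁)) := by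
  have unit (n : Fin 3 → ℝ) (hn : ∑ i, n i ^ 2 = 1) : n ⬝ᵥ n = 1 := by
    simpa [dotProduct, sq] using hn
  replace hn₁ := unit n₁ hn₁
  replace hn₂ := unit n₂ hn₂
  replace hn₁' := unit n₁' hn₁'
  replace hn₂' := unit n₂' hn₂'
  have hE : a • devOuter n₁ n₂ = a' • devOuter n₁' n₂' := hrep.symm.trans hrep'
  have h2 := congrArg (fun M => trace (M * M)) hE
  have h3 := congrArg det hE
  simp only [smul_mul_smul_comm, trace_smul, trace_devOuter_mul_self, det_smul, det_devOuter,
    Fintype.card_fin, hn₁, hn₂, hn₁', hn₂', smul_eq_mul] at h2 h3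
  obtain ⟨rfl, hc⟩ := eq_and_eq_of_invariants_eq ha ha' (abs_dotProduct_le_one hn₁ hn₂)
    (abs_dotProduct_le_one hn₁' hn₂') (by linear_combination 6 * h2) (by linear_combination 108 * h3)
  have hdev := smul_right_injective _ ha.ne' hE
  exact ⟨rfl, eq_or_swap_or_neg_of_vecMulVec_add_eq hn₁ hn₂ hn₁' hn₂'
    (vecMulVec_add_eq_of_devOuter_eq hdev hc)⟩

/-- Uniqueness of the multipole representation of a nonzero second-order deviator:
the amplitude `a > 0` is unique, and the pair of unit multipoles is unique up to
swapping and an even number of sign changes. -/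
theorem multipole_representation_unique (D : Matrix (Fin 3) (Fin 3) ℝ)
    (hD : D ≠ 0)
    (a a' : ℝ) (n₁ n₂ n₁' n₂' : Fin 3 → ℝ)
    (ha : 0 < a) (ha' : 0 < a')
    (hn₁ : ∑ i, n₁ i ^ 2 = 1) (hn₂ : ∑ i, n₂ i ^ 2 = 1)
    (hn₁' : ∑ i, n₁' i ^ 2 = 1) (hn₂' : ∑ i, n₂' i ^ 2 = 1)
    (hrep : D = a • devOuter n₁ n₂) (hrep' : D = a' • devOuter n₁' n₂') :
    a = a' ∧
    ((n₁' = n₁ ∧ n₂' = n₂) ∨ (n₁' = n₂ ∧ n₂' = n₁) ∨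
     (n₁' = -n₁ ∧ n₂' = -n₂) ∨ (n₁' = -n₂ ∧ n₂' = -n₁)) :=
  multipole_representation_unique_general D a a' n₁ n₂ n₁' n₂' ha ha' hn₁ hn₂ hn₁' hn₂' hrep hrep'
end

section
/- Let D = diag(λ₁, λ₂, −λ₁−λ₂) be a traceless diagonal 3×3 matrix with 2λ₁+λ₂ ≥ 0 and −λ₁−2λ₂ ≥ 0, and set a = λ₁ − λ₂ > 0. Then D = a⌊m₁⊗m₂⌋, where m₁ = (√((2λ₁+λ₂)/a), √((−λ₁−2λ₂)/a), 0)ᵀ and m₂ = (√((2λ₁+λ₂)/a), −√((−λ₁−2λ₂)/a), 0)ᵀ; in particular m₁ and m₂ are unit vectors and the eigenvectors e₁ and e₂ are the bisectors of the multipole pair. -/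
open Finset Matrix

/-- The second vector is the mirror image of the first in the `e₁e₃`-plane, so the off-diagonal
terms `p * (-q) + q * p` of the symmetrised outer product cancel. -/
theorem devOuter_reflectedPair (p q : ℝ) :
    devOuter ![p, q, 0] ![p, -q, 0] =
      diagonal ![(2 * p ^ 2 + q ^ 2) / 3, -(p ^ 2 + 2 * q ^ 2) / 3, (q ^ 2 - p ^ 2) / 3] := by
  ext i j
  fin_cases i <;> fin_cases j <;>
    simp [devOuter, Fin.sum_univ_three, one_apply] <;> ring

theorem reflectedPair_add (p q : ℝ) :
    (fun i => (![p, q, 0] : Fin 3 → ℝ) i + (![p, -q, 0] : Fin 3 → ℝ) i) =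
      fun i => 2 * p * (![1, 0, 0] : Fin 3 → ℝ) i := by
  funext i
  fin_cases i <;> simp; ring

theorem reflectedPair_sub (p q : ℝ) :
    (fun i => (![p, q, 0] : Fin 3 → ℝ) i - (![p, -q, 0] : Fin 3 → ℝ) i) =
      fun i => 2 * q * (![0, 1, 0] : Fin 3 → ℝ) i := by
  funext i
  fin_cases i <;> simp; ring

theorem sum_sq_vecThree (x y z : ℝ) : ∑ i, (![x, y, z] : Fin 3 → ℝ) i ^ 2 = x ^ 2 + y ^ 2 + z ^ 2 := by
  simp [Fin.sum_univ_three]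

/-- Explicit multipoles of the traceless diagonal matrix `diag(λ₁, λ₂, −λ₁−λ₂)`:
with `a = λ₁ − λ₂ > 0`, `D = a⌊m₁⊗m₂⌋` for the given unit vectors `m₁, m₂`, and the
eigenvectors `e₁, e₂` are the bisectors of the multipole pair. -/
theorem multipoles_distinct_eigenvalues (l1 l2 : ℝ)
    (h1 : 0 ≤ 2 * l1 + l2) (h2 : 0 ≤ -l1 - 2 * l2) (ha : 0 < l1 - l2) :
    let a : ℝ := l1 - l2
    let D : Matrix (Fin 3) (Fin 3) ℝ := Matrix.diagonal ![l1, l2, -l1 - l2]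
    let m₁ : Fin 3 → ℝ := ![Real.sqrt ((2 * l1 + l2) / a), Real.sqrt ((-l1 - 2 * l2) / a), 0]
    let m₂ : Fin 3 → ℝ := ![Real.sqrt ((2 * l1 + l2) / a), -Real.sqrt ((-l1 - 2 * l2) / a), 0]
    (∑ i, m₁ i ^ 2 = 1) ∧ (∑ i, m₂ i ^ 2 = 1) ∧
    D = a • devOuter m₁ m₂ ∧
    -- e₁ and e₂ bisect the multipole pair
    (fun i => m₁ i + m₂ i) =
      (fun i => 2 * Real.sqrt ((2 * l1 + l2) / a) * (![1, 0, 0] : Fin 3 → ℝ) i) ∧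
    (fun i => m₁ i - m₂ i) =
      (fun i => 2 * Real.sqrt ((-l1 - 2 * l2) / a) * (![0, 1, 0] : Fin 3 → ℝ) i) := by
  intro a D m₁ m₂
  have hp : Real.sqrt ((2 * l1 + l2) / a) ^ 2 = (2 * l1 + l2) / a :=
    Real.sq_sqrt (div_nonneg h1 ha.le)
  have hq : Real.sqrt ((-l1 - 2 * l2) / a) ^ 2 = (-l1 - 2 * l2) / a :=
    Real.sq_sqrt (div_nonneg h2 ha.le)
  have hunit : (2 * l1 + l2) / a + (-l1 - 2 * l2) / a + 0 ^ 2 = 1 := by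
    simp only [a]
    field_simp
    ring
  refine ⟨?_, ?_, ?_, reflectedPair_add _ _, reflectedPair_sub _ _⟩
  · rwa [sum_sq_vecThree, hp, hq]
  · rwa [sum_sq_vecThree, neg_sq, hp, hq]
  · rw [devOuter_reflectedPair, hp, hq, ← diagonal_smul]
    refine congrArg diagonal (funext fun i => ?_)
    fin_cases i <;> simp [a] <;> field_simp [ha.ne'] <;> ring
end
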